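/- For every partition λ of n and every binary sequence b ∈ 𝔹_{n−2}, the recursively defined relation ≤_{λ,b} is a partial order on SYT(λ): if b_1 = 0, then S ≤_{λ,b} T iff ε_n(S) < ε_n(T), or ε_n(S) = ε_n(T) and d(S) ≤_{μ,b_†} d(T); if b_1 = 1, then S ≤_{λ,b} T iff ε_n(ev(S)) < ε_n(ev(T)), or ε_n(ev(S)) = ε_n(ev(T)) and d(ev(S)) ≤_{μ,ol(b_†)} d(ev(T)) (where μ = sh(d(T)) or sh(d(ev(T))) respectively). -/

import Mathlib

/-!
Common combinatorial background: standard Young tableaux encoded as chains of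
Young diagrams, the box-removal map `d`, box-addition `up`, the row statistic
`ε_k`, binary sequences (as functions `ℕ → Bool`), the generalised bijections
`phi` and partial orders `leB` of Definition 4.1, and interval parabolic
subgroups of symmetric groups.
-/

open scoped BigOperators

/-- A standard Young tableau with `n` boxes, encoded as the chain of Young
diagrams `∅ = chain 0 ⊂ chain 1 ⊂ ⋯ ⊂ chain n`, where `chain k` is the shape
occupied by the entries `1, …, k`. -/
structure SYT (n : ℕ) where
  chain : ℕ → YoungDiagram
  chain_zero : chain 0 = ⊥
  chain_mono : ∀ k, chain k ≤ chain (k + 1)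
  chain_card : ∀ k, k ≤ n → (chain k).card = k
  chain_stable : ∀ k, n ≤ k → chain k = chain n

namespace SYT

/-- The shape of a standard Young tableau. -/
def shape {n : ℕ} (T : SYT n) : YoungDiagram := T.chain n

lemma chain_monotone {n : ℕ} (T : SYT n) : Monotone T.chain :=
  monotone_nat_of_le_succ T.chain_mono

/-- `ε_k(T)`: the (0-indexed) row of `T` containing the entry `k`. -/
noncomputable def row {n : ℕ} (T : SYT n) (k : ℕ) : ℕ :=
  sInf {i | ∃ j, (i, j) ∈ T.chain k ∧ (i, j) ∉ T.chain (k - 1)}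

/-- `d(T)`: the tableau obtained from `T` by removing the box containing the
largest entry. -/
def d {n : ℕ} (T : SYT (n + 1)) : SYT n where
  chain k := T.chain (min k n)
  chain_zero := by simpa using T.chain_zero
  chain_mono k := T.chain_monotone (by omega)
  chain_card k hk := by
    show (T.chain (min k n)).card = k
    rw [min_eq_left hk]; exact T.chain_card k (by omega)
  chain_stable k hk := by
    show T.chain (min k n) = T.chain (min n n)
    rw [min_eq_right hk, min_self]

/-- The one-row Young diagram with `m` cells. -/
def rowDiagram (m : ℕ) : YoungDiagram where
  cells := (Finset.range m).map ⟨fun j => (0, j), fun a b h => by simpa using h⟩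
  isLowerSet := by
    rintro ⟨x1, x2⟩ ⟨y1, y2⟩ ⟨h1, h2⟩ hx
    simp only [Finset.coe_map, Function.Embedding.coeFn_mk, Set.mem_image,
      Finset.mem_coe, Finset.mem_range, Prod.mk.injEq] at hx ⊢
    change ∃ j < m, ((0, j) : ℕ × ℕ) = (x1, x2) at hx
    change ∃ j < m, ((0, j) : ℕ × ℕ) = (y1, y2)
    simp only [Prod.mk.injEq] at hx ⊢
    obtain ⟨j, hj, rfl, rfl⟩ := hx
    exact ⟨y2, by omega, by omega, rfl⟩

lemma rowDiagram_card (m : ℕ) : (rowDiagram m).card = m := by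
  simp [rowDiagram, YoungDiagram.card]

lemma rowDiagram_mono {a b : ℕ} (h : a ≤ b) : rowDiagram a ≤ rowDiagram b := by
  intro x hx
  simp only [rowDiagram, YoungDiagram.mem_mk, Finset.mem_coe, Finset.mem_map,
    Function.Embedding.coeFn_mk, Finset.mem_range, SetLike.mem_coe] at hx ⊢
  obtain ⟨j, hj, rfl⟩ := (Finset.mem_map (f := ⟨fun j => ((0, j) : ℕ × ℕ), fun a b h => by simpa using h⟩)).mp hx
  rw [Finset.mem_range] at hj
  exact (Finset.mem_map (f := ⟨fun j => ((0, j) : ℕ × ℕ), fun a b h => by simpa using h⟩)).mpr ⟨j, Finset.mem_range.mpr (by omega), rfl⟩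

lemma rowDiagram_zero : rowDiagram 0 = ⊥ := by
  ext x
  simp [rowDiagram, YoungDiagram.mem_mk]

/-- The one-row standard Young tableau with `n` boxes. -/
def rowSYT (n : ℕ) : SYT n where
  chain k := rowDiagram (min k n)
  chain_zero := by simpa using rowDiagram_zero
  chain_mono k := rowDiagram_mono (by omega)
  chain_card k hk := by
    show (rowDiagram (min k n)).card = k
    rw [min_eq_left hk]; exact rowDiagram_card k
  chain_stable k hk := by
    show rowDiagram (min k n) = rowDiagram (min n n)
    rw [min_eq_right hk, min_self]

open Classical in
/-- `S⁺`: add a box containing the entry `n + 1` to `S` so that the resulting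
tableau has shape `μ` (junk value if this is impossible). -/
noncomputable def up {n : ℕ} (S : SYT n) (μ : YoungDiagram) : SYT (n + 1) :=
  if h : S.shape ≤ μ ∧ μ.card = n + 1 then
    { chain := fun k => if k ≤ n then S.chain k else μ
      chain_zero := by simpa using S.chain_zero
      chain_mono := by
        intro k
        show (if k ≤ n then S.chain k else μ) ≤ (if k + 1 ≤ n then S.chain (k + 1) else μ)
        rcases le_or_gt (k + 1) n with h2 | h2
        · rw [if_pos (by omega : k ≤ n), if_pos h2]
          exact S.chain_mono k
        · rw [if_neg (by omega : ¬ k + 1 ≤ n)]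
          by_cases h1 : k ≤ n
          · rw [if_pos h1]
            have hkn : k = n := by omega
            subst hkn
            exact h.1
          · rw [if_neg h1]
      chain_card := by
        intro k hk
        show (if k ≤ n then S.chain k else μ).card = k
        by_cases h1 : k ≤ n
        · rw [if_pos h1]; exact S.chain_card k h1
        · rw [if_neg h1]
          have : k = n + 1 := by omega
          rw [h.2, this]
      chain_stable := by
        intro k hk
        show (if k ≤ n then S.chain k else μ) = (if n + 1 ≤ n then S.chain (n + 1) else μ)
        rw [if_neg (by omega : ¬ k ≤ n), if_neg (by omega : ¬ n + 1 ≤ n)] }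
  else rowSYT (n + 1)

end SYT

/-- Complementation of a binary sequence (`ol` in the paper, swapping `0` and `1`). -/
def olB (b : ℕ → Bool) : ℕ → Bool := fun i => !b i

/-- Truncation `b ↦ b_† = b₂b₃⋯` of a binary sequence. -/
def shiftB (b : ℕ → Bool) : ℕ → Bool := fun i => b (i + 1)

/-- The generalised bijection `φ_{λ,b}` of Definition 4.1(1), defined (for an
arbitrary shape-preserving family of evacuation involutions `ev`) by
`φ_{λ,b}(T) = (φ_{μ,b_†}(d T))⁺` if `b₁ = 0` and
`φ_{λ,b}(T) = (φ_{μ,ol(b_†)}(d (ev T)))⁺` if `b₁ = 1`. -/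
noncomputable def phiB (ev : ∀ m, SYT m → SYT m) : ∀ n : ℕ, (ℕ → Bool) → SYT n → SYT n
  | 0, _, T => T
  | n + 1, b, T =>
    if b 0 then (phiB ev n (olB (shiftB b)) ((ev (n + 1) T).d)).up T.shape
    else (phiB ev n (shiftB b) T.d).up T.shape

/-- The generalised partial order `≤_{λ,b}` of Definition 4.1(2), defined
recursively (relative to a family of evacuation involutions `ev`). -/
noncomputable def leB (ev : ∀ m, SYT m → SYT m) : ∀ n : ℕ, (ℕ → Bool) → SYT n → SYT n → Prop
  | 0, _, _, _ => True
  | n + 1, b, S, T =>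
    if b 0 then
      (ev (n + 1) S).row (n + 1) < (ev (n + 1) T).row (n + 1) ∨
        ((ev (n + 1) S).row (n + 1) = (ev (n + 1) T).row (n + 1) ∧
          leB ev n (olB (shiftB b)) ((ev (n + 1) S).d) ((ev (n + 1) T).d))
    else
      S.row (n + 1) < T.row (n + 1) ∨
        (S.row (n + 1) = T.row (n + 1) ∧ leB ev n (shiftB b) S.d T.d)

/-- The strict order `<_{λ,b}`. -/
noncomputable def ltB (ev : ∀ m, SYT m → SYT m) (n : ℕ) (b : ℕ → Bool) (S T : SYT n) : Prop :=
  leB ev n b S T ∧ S ≠ T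

/-- The standard parabolic subgroup `S_{[a,b]}` of `S_n` consisting of the
permutations fixing every point outside the (1-indexed) interval `[a,b]`. -/
def intervalSubgroup (n a b : ℕ) : Subgroup (Equiv.Perm (Fin n)) where
  carrier := {σ | ∀ i : Fin n, (i.val + 1 < a ∨ b < i.val + 1) → σ i = i}
  one_mem' := fun _ _ => rfl
  mul_mem' := by
    intro σ τ hσ hτ i hi
    have : (σ * τ) i = σ (τ i) := rfl
    rw [this, hτ i hi, hσ i hi]
  inv_mem' := by
    intro σ hσ i hi
    conv_lhs => rw [← hσ i hi]
    exact σ.symm_apply_apply i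

/-- The lower endpoints of the intervals in the multiplicity-free chain
labelled by a binary sequence `b` (0-indexed: `chainLo b (m-1)` is the lower
endpoint of the interval `I_m`); `b m = true` means the smallest element is
removed at the `m`-th step. -/
def chainLo (b : ℕ → Bool) : ℕ → ℕ
  | 0 => 1
  | m + 1 => chainLo b m + (if b m then 1 else 0)

/-- The upper endpoints of the intervals in the multiplicity-free chain
labelled by a binary sequence `b`; `b m = false` means the largest element is
removed at the `m`-th step. -/
def chainHi (n : ℕ) (b : ℕ → Bool) : ℕ → ℕ
  | 0 => n
  | m + 1 => chainHi n b m - (if b m then 0 else 1)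

/-!
Removing the largest entry forgets only the row it sat in, since its box is the box just past
the end of that row of `d T`. Hence `T ↦ (ε_{n+1}(T), d(T))` is injective, and so is
`T ↦ (ε_{n+1}(ev T), d(ev T))` because `ev` is an involution. By definition `≤_{λ,b}` is the
pullback along one of these maps of the lexicographic order built from `<` on rows and the
order `≤_{μ,b'}` one size down, which is a partial order by induction on `n`.
-/

namespace SYT

theorem chain_injective {n : ℕ} : Function.Injective (chain : SYT n → ℕ → YoungDiagram) := by
  rintro ⟨⟩ ⟨⟩ h
  cases h
  rfl

instance : Subsingleton (SYT 0) :=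
  ⟨fun S T => chain_injective <| funext fun k => by
    rw [S.chain_stable k k.zero_le, T.chain_stable k k.zero_le, S.chain_zero, T.chain_zero]⟩

variable {n : ℕ} (T : SYT (n + 1))

theorem exists_cells_sdiff_eq_singleton :
    ∃ c, (T.chain (n + 1)).cells \ (T.chain n).cells = {c} := by
  apply Finset.card_eq_one.mp
  rw [Finset.card_sdiff_of_subset (T.chain_mono n)]
  have h₁ := T.chain_card (n + 1) le_rfl
  have h₀ := T.chain_card n n.le_succ
  simp only [YoungDiagram.card] at h₁ h₀
  omega

variable {T} {c : ℕ × ℕ}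

theorem mem_chain_succ_iff (hc : (T.chain (n + 1)).cells \ (T.chain n).cells = {c}) :
    ∀ x, x ∈ T.chain (n + 1) ↔ x = c ∨ x ∈ T.chain n := by
  intro x
  have hx := congrArg (x ∈ ·) hc
  simp only [Finset.mem_sdiff, Finset.mem_singleton, eq_iff_iff] at hx
  have hmono : x ∈ T.chain n → x ∈ T.chain (n + 1) := fun h => T.chain_mono n h
  change x ∈ (T.chain (n + 1)).cells ↔ x = c ∨ x ∈ (T.chain n).cells
  tauto

theorem mem_chain_succ_and_notMem_chain
    (hc : (T.chain (n + 1)).cells \ (T.chain n).cells = {c}) :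
    c ∈ T.chain (n + 1) ∧ c ∉ T.chain n := by
  simpa using (Finset.ext_iff.mp hc c).mpr (Finset.mem_singleton_self c)

theorem row_succ_eq (hc : (T.chain (n + 1)).cells \ (T.chain n).cells = {c}) :
    T.row (n + 1) = c.1 := by
  have hnew := mem_chain_succ_and_notMem_chain hc
  have hrows : {i | ∃ j, (i, j) ∈ T.chain (n + 1) ∧ (i, j) ∉ T.chain n} = {c.1} := by
    ext i
    simp only [Set.mem_ofPred_eq, Set.mem_singleton_iff, mem_chain_succ_iff hc]
    constructor
    · rintro ⟨j, hj | hj, hj'⟩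
      exacts [congrArg Prod.fst hj, absurd hj hj']
    · rintro rfl
      exact ⟨c.2, Or.inl rfl, hnew.2⟩
  rw [row, Nat.add_sub_cancel, hrows, csInf_singleton]

theorem snd_eq_rowLen (hc : (T.chain (n + 1)).cells \ (T.chain n).cells = {c}) :
    c.2 = (T.chain n).rowLen c.1 := by
  have hnew := mem_chain_succ_and_notMem_chain hc
  refine eq_of_forall_lt_iff fun j => ?_
  rw [← YoungDiagram.mem_iff_lt_rowLen]
  constructor
  · intro hj
    have hmem : (c.1, j) ∈ T.chain (n + 1) :=
      (T.chain (n + 1)).isLowerSet (show (c.1, j) ≤ c from ⟨le_rfl, hj.le⟩) hnew.1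
    rcases (mem_chain_succ_iff hc _).mp hmem with h | h
    · exact absurd (congrArg Prod.snd h) hj.ne
    · exact h
  · intro hj
    by_contra! hle
    exact hnew.2 ((T.chain n).isLowerSet (show c ≤ (c.1, j) from ⟨le_rfl, hle⟩) hj)

theorem injective_row_d : Function.Injective fun T : SYT (n + 1) => (T.row (n + 1), T.d) := by
  intro S T h
  obtain ⟨hrow, hd⟩ := Prod.mk.inj h
  have hchain : ∀ k ≤ n, S.chain k = T.chain k := fun k hk => by
    simpa [d, min_eq_left hk] using congrArg (chain · k) hd
  obtain ⟨cS, hcS⟩ := S.exists_cells_sdiff_eq_singleton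
  obtain ⟨cT, hcT⟩ := T.exists_cells_sdiff_eq_singleton
  have hcell : cS = cT := by
    have hfst : cS.1 = cT.1 := by rw [← row_succ_eq hcS, ← row_succ_eq hcT, hrow]
    refine Prod.ext hfst ?_
    rw [snd_eq_rowLen hcS, snd_eq_rowLen hcT, hfst, hchain n le_rfl]
  have hlast : S.chain (n + 1) = T.chain (n + 1) := SetLike.ext fun x => by
    rw [mem_chain_succ_iff hcS, mem_chain_succ_iff hcT, hcell, hchain n le_rfl]
  refine chain_injective (funext fun k => ?_)
  rcases le_or_gt k n with hk | hk
  · exact hchain k hk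
  · rw [S.chain_stable k hk, T.chain_stable k hk, hlast]

end SYT

-- Every field is supplied by the `Std.Refl`, `IsTrans` and `Std.Antisymm` instances of `Prod.Lex`.
instance {α β : Type*} {s : α → α → Prop} {r : β → β → Prop} [IsStrictOrder α s]
    [IsPartialOrder β r] : IsPartialOrder (α × β) (Prod.Lex s r) where

section
variable (ev : ∀ m, SYT m → SYT m) (n : ℕ) (b : ℕ → Bool)

theorem leB_succ_of_false (hb : b 0 = false) :
    leB ev (n + 1) b =
      (fun T => (T.row (n + 1), T.d)) ⁻¹'o Prod.Lex (· < ·) (leB ev n (shiftB b)) := by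
  funext S T
  simp [leB, hb, Prod.lex_iff, Order.Preimage]

theorem leB_succ_of_true (hb : b 0 = true) :
    leB ev (n + 1) b = (fun T => ((ev (n + 1) T).row (n + 1), (ev (n + 1) T).d)) ⁻¹'o
      Prod.Lex (· < ·) (leB ev n (olB (shiftB b))) := by
  funext S T
  simp [leB, hb, Prod.lex_iff, Order.Preimage]

theorem isPartialOrder_leB (hev : ∀ m, Function.Injective (ev m)) :
    IsPartialOrder (SYT n) (leB ev n b) := by
  induction n generalizing b with
  | zero =>
    exact { refl := fun _ => trivial, trans := fun _ _ _ _ _ => trivial,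
            antisymm := fun S T _ _ => Subsingleton.elim S T }
  | succ n ih =>
    cases hb : b 0
    · have := ih (shiftB b)
      rw [leB_succ_of_false ev n b hb]
      exact (RelEmbedding.preimage ⟨_, SYT.injective_row_d⟩ _).isPartialOrder
    · have := ih (olB (shiftB b))
      rw [leB_succ_of_true ev n b hb]
      exact (RelEmbedding.preimage ⟨_, SYT.injective_row_d.comp (hev (n + 1))⟩ _).isPartialOrder

end

theorem leB_is_partial_order_general
    (n : ℕ) (lam : YoungDiagram) (b : ℕ → Bool)
    (ev : ∀ m, SYT m → SYT m)
    (hev_invol : ∀ m, Function.Involutive (ev m)) :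
    IsPartialOrder {T : SYT n // T.shape = lam}
      (fun S T => leB ev n b S.1 T.1) :=
  have := isPartialOrder_leB ev n b fun m => (hev_invol m).injective
  (RelEmbedding.preimage (Function.Embedding.subtype _) (leB ev n b)).isPartialOrder

theorem leB_is_partial_order
    (n : ℕ) (lam : YoungDiagram) (hlam : lam.card = n) (b : ℕ → Bool)
    (ev : ∀ m, SYT m → SYT m)
    (hev_shape : ∀ m (T : SYT m), (ev m T).shape = T.shape)
    (hev_invol : ∀ m, Function.Involutive (ev m)) :
    IsPartialOrder {T : SYT n // T.shape = lam}
      (fun S T => leB ev n b S.1 T.1) :=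
  leB_is_partial_order_general n lam b ev hev_invol
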